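/- Let G be a Monge DAG on {s,...,N}. Then both d_min(n) and d_max(n), the least and greatest number of links over all shortest s-n paths, are monotonically nondecreasing in n ∈ {s,...,N} (with d_min(s) = d_max(s) = 0). -/

import Mathlib

/-- A Monge (submodular) edge-length function on the complete DAG on `{s,...,N}`. -/
def IsMonge (s N : ℕ) (c : ℕ → ℕ → ℝ) : Prop :=
  ∀ i₁ i₂ j₂ j₁ : ℕ, s ≤ i₁ → i₁ < i₂ → i₂ < j₂ → j₂ < j₁ → j₁ ≤ N →
    c i₁ j₂ + c i₂ j₁ ≤ c i₁ j₁ + c i₂ j₂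

/-- `v 0, v 1, ..., v m` is an `m`-link path from `a` to `b` inside `{s,...,N}`. -/
def IsPath (s N a b m : ℕ) (v : ℕ → ℕ) : Prop :=
  v 0 = a ∧ v m = b ∧ (∀ k < m, v k < v (k + 1)) ∧ s ≤ a ∧ b ≤ N

/-- The length of the `m`-link path `v 0, ..., v m` under edge lengths `c`. -/
def pathLen (c : ℕ → ℕ → ℝ) (m : ℕ) (v : ℕ → ℕ) : ℝ :=
  ∑ k ∈ Finset.range m, c (v k) (v (k + 1))

/-- The set of lengths of `m`-link `a`-`b` paths in the complete DAG on `{s,...,N}`. -/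
def pathLens (s N a b m : ℕ) (c : ℕ → ℕ → ℝ) : Set ℝ :=
  {x | ∃ v, IsPath s N a b m v ∧ pathLen c m v = x}

/-- The set of link counts of shortest `s`-`n` paths in `G(lam)`
    (the graph with `lam` subtracted from every edge length). -/
def DSet (s N n : ℕ) (c : ℕ → ℕ → ℝ) (lam : ℝ) : Set ℕ :=
  {m | ∃ v, IsPath s N s n m v ∧
    ∀ m' w, IsPath s N s n m' w →
      pathLen c m v - m * lam ≤ pathLen c m' w - m' * lam}

/-- The set of lengths of all `s`-`n` paths (any number of links). -/
def allLens (s N n : ℕ) (c : ℕ → ℕ → ℝ) : Set ℝ :=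
  {x | ∃ m v, IsPath s N s n m v ∧ pathLen c m v = x}


/-!
Let `u` be a shortest `m₁`-link path to `n₁` and `w` a shortest `m₂`-link path to `n₂ ≥ n₁`, with
`m₂ < m₁`. Shifted back by `m₁ - m₂` positions, `u` starts above `w` and ends below it, so at some
step it crosses `w`. Exchanging the tails of `u` and `w` there gives an `m₂`-link path to `n₁` and
an `m₁`-link path to `n₂` of total length at most that of `u` and `w`, by the Monge inequality for
the two crossing edges. Hence both are shortest paths, and neither the least nor the greatest link
count can drop from `n₁` to `n₂`.
-/
namespace IsPath

variable {s N a b m : ℕ} {v : ℕ → ℕ}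

theorem strictMonoOn (h : IsPath s N a b m v) : StrictMonoOn v (Set.Iic m) :=
  strictMonoOn_of_lt_add_one Set.ordConnected_Iic fun k _ _ hk => h.2.2.1 k hk

theorem lt_of_lt (h : IsPath s N a b m v) {i j : ℕ} (hij : i < j) (hj : j ≤ m) : v i < v j :=
  h.strictMonoOn (Set.mem_Iic.2 (hij.le.trans hj)) (Set.mem_Iic.2 hj) hij

theorem le_of_le (h : IsPath s N a b m v) {i j : ℕ} (hij : i ≤ j) (hj : j ≤ m) : v i ≤ v j :=
  h.strictMonoOn.monotoneOn (Set.mem_Iic.2 (hij.trans hj)) (Set.mem_Iic.2 hj) hij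

theorem eq_zero_of_self (h : IsPath s N a a m v) : m = 0 := by
  by_contra hm
  have := h.lt_of_lt (Nat.pos_of_ne_zero hm) le_rfl
  rw [h.1, h.2.1] at this
  exact lt_irrefl a this

end IsPath

/-- Follow `u` up to index `p`, then continue with `w` from index `q + 1` on. -/
def splice (u : ℕ → ℕ) (p : ℕ) (w : ℕ → ℕ) (q : ℕ) : ℕ → ℕ :=
  fun k => if k ≤ p then u k else w (k - p + q)

section Splice

variable {s N a b a' b' m m' p q : ℕ} {u w : ℕ → ℕ}

theorem isPath_splice (hu : IsPath s N a b m u) (hw : IsPath s N a' b' m' w) (hp : p ≤ m)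
    (hq : q < m') (hlt : u p < w (q + 1)) :
    IsPath s N a b' (p + (m' - q)) (splice u p w q) := by
  refine ⟨by simpa [splice] using hu.1, ?_, fun k hk => ?_, hu.2.2.2.1, hw.2.2.2.2⟩
  · simp only [splice, if_neg (show ¬ p + (m' - q) ≤ p by omega)]
    rw [show p + (m' - q) - p + q = m' by omega, hw.2.1]
  · unfold splice
    rcases lt_trichotomy k p with hkp | rfl | hkp
    · rw [if_pos hkp.le, if_pos (Nat.succ_le_of_lt hkp)]
      exact hu.2.2.1 k (by omega)
    · rw [if_pos le_rfl, if_neg (by omega), show k + 1 - k + q = q + 1 by omega]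
      exact hlt
    · rw [if_neg (by omega), if_neg (by omega), show k + 1 - p + q = k - p + q + 1 by omega]
      exact hw.2.2.1 _ (by omega)

theorem pathLen_eq_add_edge_add (c : ℕ → ℕ → ℝ) (v : ℕ → ℕ) (hp : p < m) :
    pathLen c m v = pathLen c p v + c (v p) (v (p + 1)) +
      ∑ k ∈ Finset.Ico (p + 1) m, c (v k) (v (k + 1)) := by
  unfold pathLen
  rw [← Finset.sum_range_succ, Finset.sum_range_add_sum_Ico _ hp]

theorem pathLen_splice (c : ℕ → ℕ → ℝ) (hq : q < m') :
    pathLen c (p + (m' - q)) (splice u p w q) = pathLen c p u + c (u p) (w (q + 1)) +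
      ∑ k ∈ Finset.Ico (q + 1) m', c (w k) (w (k + 1)) := by
  rw [pathLen_eq_add_edge_add c _ (show p < p + (m' - q) by omega)]
  congr 1
  · congr 1
    · refine Finset.sum_congr rfl fun k hk => ?_
      have hk := Finset.mem_range.1 hk
      simp only [splice, if_pos hk.le, if_pos (show k + 1 ≤ p by omega)]
    · simp only [splice, if_pos le_rfl, if_neg (show ¬ p + 1 ≤ p by omega),
        show p + 1 - p + q = q + 1 by omega]
  · rw [Finset.sum_Ico_eq_sum_range, Finset.sum_Ico_eq_sum_range,
      show p + (m' - q) - (p + 1) = m' - (q + 1) by omega]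
    refine Finset.sum_congr rfl fun i _ => ?_
    simp only [splice, if_neg (show ¬ p + 1 + i ≤ p by omega),
      if_neg (show ¬ p + 1 + i + 1 ≤ p by omega), show p + 1 + i - p + q = q + 1 + i by omega,
      show p + 1 + i + 1 - p + q = q + 1 + i + 1 by omega]

theorem pathLen_splice_add_splice_le {c : ℕ → ℕ → ℝ} (hc : IsMonge s N c)
    (hu : IsPath s N a b m u) (hw : IsPath s N a' b' m' w) (hp : p < m) (hq : q < m')
    (hcross : w q < u p) (hcross' : u (p + 1) ≤ w (q + 1)) :
    pathLen c (q + (m - p)) (splice w q u p) + pathLen c (p + (m' - q)) (splice u p w q) ≤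
      pathLen c m u + pathLen c m' w := by
  have hedges : c (w q) (u (p + 1)) + c (u p) (w (q + 1)) ≤
      c (w q) (w (q + 1)) + c (u p) (u (p + 1)) := by
    rcases hcross'.eq_or_lt with heq | hlt
    · rw [heq]
    · refine hc _ _ _ _ ?_ hcross (hu.lt_of_lt (Nat.lt_succ_self p) hp) hlt ?_
      · exact hw.2.2.2.1.trans (hw.1 ▸ hw.le_of_le (Nat.zero_le q) hq.le)
      · exact (hw.2.1 ▸ hw.le_of_le hq le_rfl).trans hw.2.2.2.2
  rw [pathLen_splice c hp, pathLen_splice c hq, pathLen_eq_add_edge_add c u hp,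
    pathLen_eq_add_edge_add c w hq]
  linarith

end Splice

theorem exists_crossing {f g : ℕ → ℕ} {M : ℕ} (h₀ : g 0 < f 0) (hM : f M ≤ g M) :
    ∃ t < M, g t < f t ∧ f (t + 1) ≤ g (t + 1) := by
  induction M with
  | zero => exact absurd hM (not_le.2 h₀)
  | succ M ih =>
    by_cases h : f M ≤ g M
    · obtain ⟨t, ht, hgt⟩ := ih h
      exact ⟨t, ht.trans (Nat.lt_succ_self M), hgt⟩
    · exact ⟨M, Nat.lt_succ_self M, not_le.1 h, hM⟩

theorem mem_DSet_zero {s N n m : ℕ} {c : ℕ → ℕ → ℝ} :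
    m ∈ DSet s N n c 0 ↔ ∃ v, IsPath s N s n m v ∧
      ∀ m' w, IsPath s N s n m' w → pathLen c m v ≤ pathLen c m' w := by
  simp [DSet]

theorem DSet_exchange {s N n₁ n₂ m₁ m₂ : ℕ} {c : ℕ → ℕ → ℝ} (hc : IsMonge s N c)
    (hn : n₁ ≤ n₂) (hm : m₂ < m₁) (h₁ : m₁ ∈ DSet s N n₁ c 0) (h₂ : m₂ ∈ DSet s N n₂ c 0) :
    m₂ ∈ DSet s N n₁ c 0 ∧ m₁ ∈ DSet s N n₂ c 0 := by
  obtain ⟨u, hu, hu_min⟩ := mem_DSet_zero.1 h₁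
  obtain ⟨w, hw, hw_min⟩ := mem_DSet_zero.1 h₂
  obtain ⟨δ, rfl⟩ : ∃ δ, m₁ = m₂ + (δ + 1) := ⟨m₁ - m₂ - 1, by omega⟩
  have hstart : w 0 < u (0 + (δ + 1)) := hw.1 ▸ hu.1 ▸ hu.lt_of_lt (by omega) (by omega)
  have hend : u (m₂ + (δ + 1)) ≤ w m₂ := hu.2.1 ▸ hw.2.1 ▸ hn
  obtain ⟨t, ht, hcross, hcross'⟩ :=
    exists_crossing (f := fun k => u (k + (δ + 1))) (g := w) hstart hend
  have hstep := hu.lt_of_lt (Nat.lt_succ_self (t + (δ + 1))) (by omega)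
  rw [show t + 1 + (δ + 1) = t + (δ + 1) + 1 by omega] at hcross'
  have hR := isPath_splice hw hu ht.le (by omega) (hcross.trans hstep)
  have hR' := isPath_splice hu hw (by omega) ht (hstep.trans_le hcross')
  have hlen := pathLen_splice_add_splice_le hc hu hw (by omega) ht hcross hcross'
  rw [show t + (m₂ + (δ + 1) - (t + (δ + 1))) = m₂ by omega] at hR hlen
  rw [show t + (δ + 1) + (m₂ - t) = m₂ + (δ + 1) by omega] at hR' hlen
  have hR_ge := hu_min _ _ hR
  have hR'_ge := hw_min _ _ hR'
  exact ⟨mem_DSet_zero.2 ⟨_, hR, fun m' v hv => by linarith [hu_min m' v hv]⟩,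
    mem_DSet_zero.2 ⟨_, hR', fun m' v hv => by linarith [hw_min m' v hv]⟩⟩

/-- Both the least and the greatest link counts of shortest `s`-`n` paths are
nondecreasing in `n`, with value `0` at `n = s`. -/
theorem stmt6 (s N : ℕ) (c : ℕ → ℕ → ℝ) (hc : IsMonge s N c) (hsN : s ≤ N)
    (dmin dmax : ℕ → ℕ)
    (hmin : ∀ n, s ≤ n → n ≤ N → IsLeast (DSet s N n c 0) (dmin n))
    (hmax : ∀ n, s ≤ n → n ≤ N → IsGreatest (DSet s N n c 0) (dmax n)) :
    dmin s = 0 ∧ dmax s = 0 ∧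
    ∀ n₁ n₂, s ≤ n₁ → n₁ ≤ n₂ → n₂ ≤ N →
      dmin n₁ ≤ dmin n₂ ∧ dmax n₁ ≤ dmax n₂ := by
  refine ⟨?_, ?_, fun n₁ n₂ hs₁ h₁₂ h₂N => ⟨?_, ?_⟩⟩
  · obtain ⟨v, hv, -⟩ := (hmin s le_rfl hsN).1
    exact hv.eq_zero_of_self
  · obtain ⟨v, hv, -⟩ := (hmax s le_rfl hsN).1
    exact hv.eq_zero_of_self
  · have hmin₁ := hmin n₁ hs₁ (h₁₂.trans h₂N)
    have hmin₂ := hmin n₂ (hs₁.trans h₁₂) h₂N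
    by_contra! hlt
    exact absurd (hmin₁.2 (DSet_exchange hc h₁₂ hlt hmin₁.1 hmin₂.1).1) (not_le.2 hlt)
  · have hmax₁ := hmax n₁ hs₁ (h₁₂.trans h₂N)
    have hmax₂ := hmax n₂ (hs₁.trans h₁₂) h₂N
    by_contra! hlt
    exact absurd (hmax₂.2 (DSet_exchange hc h₁₂ hlt hmax₁.1 hmax₂.1).2) (not_le.2 hlt)
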